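/- arXiv:2407.01431 — 5 statements merged into one kernel-verified Lean document; each statement's English description precedes it below -/
import Mathlib

section
/- For every pair of vertices s,t ∈ V there exists a group Steiner path π from s to t in G that traverses at most 2(n−1) edges (counted with multiplicity) and whose length equals the group Steiner distance, i.e., w(π) = σ_G(s,t); in particular the infimum defining σ_G(s,t) is attained. -/
open SimpleGraph ENNReal

/-- The length (total weight) of a walk: the sum of its edge weights, with multiplicity. -/
def walkWeight {V : Type*} {G : SimpleGraph V} (w : V → V → ℝ) {u v : V} (p : G.Walk u v) : ℝ :=
  (p.darts.map (fun d => w d.toProd.1 d.toProd.2)).sum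

/-- A walk is a group Steiner path w.r.t. the groups `R` if it visits at least one
vertex of every group. -/
def IsGroupSteiner {V : Type*} {G : SimpleGraph V} {k : ℕ} (R : Fin k → Set V) {u v : V}
    (p : G.Walk u v) : Prop :=
  ∀ i, ∃ x ∈ R i, x ∈ p.support

/-- The group Steiner distance: the infimum of the lengths of group Steiner paths
from `s` to `t` (`∞` if there is none). -/
noncomputable def gsDist {V : Type*} (G : SimpleGraph V) (w : V → V → ℝ) {k : ℕ}
    (R : Fin k → Set V) (s t : V) : ℝ≥0∞ :=
  ⨅ p : {p : G.Walk s t // IsGroupSteiner R p}, ENNReal.ofReal (walkWeight w p.1)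

/-- The ordinary shortest-path distance: the infimum of the lengths of walks
from `s` to `t` (`∞` if there is none). -/
noncomputable def spDist {V : Type*} (G : SimpleGraph V) (w : V → V → ℝ) (s t : V) : ℝ≥0∞ :=
  ⨅ p : G.Walk s t, ENNReal.ofReal (walkWeight w p)

/-!
Starting from any group Steiner walk, shorten it while it has more than `2(n - 1)` edges.
A spanning forest of the multigraph of its edges has at most `n - 1` edges, so the remaining
edges contain a closed walk. Deleting that closed walk keeps every degree parity and keeps the
forest, hence connectivity, so by Euler's theorem (Hierholzer's splicing) the remaining edges
again form a walk from `s` to `t` through the same vertices; with non-negative weights it is no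
heavier. So the infimum may be taken over the finitely many walks with at most `2(n - 1)` edges,
and it is attained.
-/

namespace SimpleGraph

variable {V : Type*} {G : SimpleGraph V}

theorem Walk.mem_support_of_reachable {H : SimpleGraph V} {u v x : V} (q : G.Walk u v)
    (hH : ∀ e ∈ H.edgeSet, e ∈ q.edges) (hx : H.Reachable x u) : x ∈ q.support := by
  obtain ⟨w⟩ := hx
  cases w with
  | nil => exact q.start_mem_support
  | cons h _ => exact q.fst_mem_support_of_mem_edges (hH _ h)

theorem IsAcyclic.card_edgeFinset_lt [Fintype V] [Nonempty V] [Fintype G.edgeSet]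
    (hG : G.IsAcyclic) : G.edgeFinset.card < Fintype.card V := by
  classical
  obtain ⟨T, hGT, -, hT⟩ := connected_top.exists_isTree_le_of_le_of_isAcyclic le_top hG
  have := hT.card_edgeFinset
  have := Finset.card_le_card (edgeFinset_mono hGT)
  omega

theorem exists_closed_walk_le_of_card_le [Fintype V] [Nonempty V] {m : Multiset (Sym2 V)}
    (hm : ∀ e ∈ m, e ∈ G.edgeSet) (hcard : Fintype.card V ≤ Multiset.card m) :
    ∃ x, ∃ c : G.Walk x x, c.length ≠ 0 ∧ (c.edges : Multiset (Sym2 V)) ≤ m := by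
  classical
  by_cases hnodup : m.Nodup
  · -- the edges of `m` form a graph with too many edges to be a forest
    let K := fromEdgeSet {e | e ∈ m}
    have hKE : K.edgeSet = {e | e ∈ m} := by
      rw [edgeSet_fromEdgeSet, sdiff_eq_left, Set.disjoint_left]
      exact fun e he => G.not_isDiag_of_mem_edgeSet (hm e he)
    have hK : ¬ K.IsAcyclic := fun hK => by
      have := hK.card_edgeFinset_lt
      have : m.toFinset ⊆ K.edgeFinset := fun e he => by simpa [hKE] using he
      have := Finset.card_le_card this
      rw [Multiset.toFinset_card_of_nodup hnodup] at this
      omega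
    simp only [IsAcyclic, not_forall, not_not] at hK
    obtain ⟨x, c, hc⟩ := hK
    have hcm : ∀ e ∈ c.edges, e ∈ m := fun e he =>
      (Set.ext_iff.mp hKE e).mp (c.edges_subset_edgeSet he)
    refine ⟨x, c.transfer G fun e he => hm e (hcm e he), by simpa using hc.not_nil, ?_⟩
    rw [Walk.edges_transfer, Multiset.le_iff_subset (Multiset.coe_nodup.mpr hc.edges_nodup)]
    exact hcm
  · obtain ⟨e, t, rfl⟩ : ∃ e t, m = e ::ₘ e ::ₘ t := by
      simpa [Multiset.nodup_iff_ne_cons_cons] using hnodup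
    induction e using Sym2.ind with
    | h a b =>
      have hab : G.Adj a b := hm _ (Multiset.mem_cons_self _ _)
      refine ⟨a, .cons hab (.cons hab.symm .nil), by simp, ?_⟩
      simp only [Walk.edges_cons, Walk.edges_nil, Sym2.eq_swap (a := b)]
      exact Multiset.cons_le_cons _ (Multiset.cons_le_cons _ (Multiset.zero_le _))

variable [DecidableEq V]

namespace Walk

theorem even_countP_edges_iff {u v : V} (p : G.Walk u v) (x : V) :
    Even (p.edges.countP (x ∈ ·)) ↔ u ≠ v → x ≠ u ∧ x ≠ v := by
  induction p with
  | nil => simp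
  | cons huv p ih =>
    have := huv.ne
    simp only [List.countP_cons, edges_cons, Sym2.mem_iff]
    split_ifs with h <;> grind

theorem exists_edges_eq_add_of_mem_support {u v x : V} (p : G.Walk u v) (hx : x ∈ p.support)
    (c : G.Walk x x) : ∃ q : G.Walk u v, (q.edges : Multiset (Sym2 V)) = p.edges + c.edges := by
  refine ⟨(p.takeUntil x hx).append (c.append (p.dropUntil x hx)), ?_⟩
  conv_rhs => rw [← p.take_spec hx]
  simp only [edges_append, ← Multiset.coe_add]
  abel

theorem reachable_fromEdgeSet_edges {u v x : V} (p : G.Walk u v) (hx : x ∈ p.support) :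
    (fromEdgeSet {e | e ∈ p.edges}).Reachable u x := by
  refine ⟨(p.takeUntil x hx).transfer _ fun e he => ?_⟩
  rw [edgeSet_fromEdgeSet]
  exact ⟨p.edges_takeUntil_subset_edges hx he,
    G.not_isDiag_of_mem_edgeSet ((p.takeUntil x hx).edges_subset_edgeSet he)⟩

theorem exists_mem_support_countP_pos {H : SimpleGraph V} {u v x : V} (p : G.Walk u v)
    {r : Multiset (Sym2 V)} (hH : ∀ e ∈ H.edgeSet, e ∈ (p.edges : Multiset (Sym2 V)) + r)
    (hxu : H.Reachable x u) (hx : 0 < r.countP (x ∈ ·)) :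
    ∃ y ∈ p.support, 0 < r.countP (y ∈ ·) := by
  obtain ⟨w⟩ := hxu
  induction w with
  | nil => exact ⟨_, p.start_mem_support, hx⟩
  | @cons x b _ hxb _ ih =>
    by_cases hxp : x ∈ p.support
    · exact ⟨x, hxp, hx⟩
    have hxbr : s(x, b) ∈ r := (Multiset.mem_add.mp (hH s(x, b) hxb)).resolve_left
      fun h => hxp (p.fst_mem_support_of_mem_edges h)
    exact ih p hH (Multiset.countP_pos.mpr ⟨s(x, b), hxbr, Sym2.mem_mk_right x b⟩)

end Walk

theorem exists_adj_of_countP_pos {m : Multiset (Sym2 V)} (hm : ∀ e ∈ m, e ∈ G.edgeSet) {x : V}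
    (hx : 0 < m.countP (x ∈ ·)) : ∃ y, G.Adj x y ∧ s(x, y) ∈ m := by
  obtain ⟨e, he, hxe⟩ := Multiset.countP_pos.mp hx
  induction e using Sym2.ind with
  | h a b =>
    rcases Sym2.mem_iff.mp hxe with rfl | rfl
    · exact ⟨b, hm _ he, he⟩
    · exact ⟨a, (hm _ he).symm, Sym2.eq_swap ▸ he⟩


theorem exists_closed_walk_le_of_even {m : Multiset (Sym2 V)} (hm : ∀ e ∈ m, e ∈ G.edgeSet)
    (heven : ∀ y, Even (m.countP (y ∈ ·))) {x : V} (hx : 0 < m.countP (x ∈ ·)) :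
    ∃ c : G.Walk x x, c.length ≠ 0 ∧ (c.edges : Multiset (Sym2 V)) ≤ m := by
  classical
  -- A longest walk from `x` inside `m` can only stop at `x`: anywhere else it has used an odd
  -- number of the (evenly many) edges of `m` at its endpoint, so it could be prolonged.
  let P : ℕ → Prop := fun n => ∃ y, ∃ c : G.Walk x y, c.length = n ∧ (c.edges : Multiset _) ≤ m
  obtain ⟨y, c, hlen, hcm⟩ : P (Nat.findGreatest P (Multiset.card m)) :=
    Nat.findGreatest_spec (P := P) (Nat.zero_le _) ⟨x, .nil, rfl, by simp⟩
  have hstuck : (m - c.edges).countP (y ∈ ·) = 0 := by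
    by_contra hpos
    obtain ⟨z, h, hz⟩ := exists_adj_of_countP_pos
      (fun e he => hm e (Multiset.mem_of_le tsub_le_self he)) (Nat.pos_of_ne_zero hpos)
    have hle : ((c.concat h).edges : Multiset (Sym2 V)) ≤ m := by
      rw [Walk.edges_concat, List.concat_eq_append, ← Multiset.coe_add,
        ← le_tsub_iff_left hcm]
      simpa using hz
    have hcard := Multiset.card_le_card hle
    simp only [Multiset.coe_card, Walk.length_edges, Walk.length_concat] at hcard
    exact Nat.findGreatest_is_greatest (P := P) (by omega) hcard ⟨z, c.concat h, by simp, hle⟩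
  rw [Multiset.countP_sub hcm, Multiset.coe_countP] at hstuck
  by_cases hyx : y = x
  · subst hyx
    refine ⟨c, fun h0 => ?_, hcm⟩
    rw [← Walk.length_edges, List.length_eq_zero_iff] at h0
    simp [h0] at hstuck
    omega
  · have hodd := (c.even_countP_edges_iff y).not.mpr (by simp [hyx, Ne.symm hyx])
    have hle : c.edges.countP (y ∈ ·) ≤ m.countP (y ∈ ·) := by
      simpa [Multiset.coe_countP] using Multiset.countP_le_of_le (y ∈ ·) hcm
    have := (Nat.even_sub hle).not.mpr (by tauto)
    rw [hstuck] at this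
    exact (this ⟨0, rfl⟩).elim

/-- Hierholzer's splicing argument, for multisets of edges. -/
theorem Walk.exists_edges_eq_add_of_even (H : SimpleGraph V) {u v : V} (p : G.Walk u v)
    {r : Multiset (Sym2 V)} (hr : ∀ e ∈ r, e ∈ G.edgeSet) (heven : ∀ x, Even (r.countP (x ∈ ·)))
    (hH : ∀ e ∈ H.edgeSet, e ∈ (p.edges : Multiset (Sym2 V)) + r)
    (hreach : ∀ e ∈ r, ∀ x ∈ e, H.Reachable x u) :
    ∃ q : G.Walk u v, (q.edges : Multiset (Sym2 V)) = p.edges + r := by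
  induction hn : Multiset.card r using Nat.strong_induction_on generalizing r p with
  | _ n ih =>
  obtain rfl | ⟨e, he⟩ := r.empty_or_exists_mem
  · exact ⟨p, by simp⟩
  obtain ⟨a, ha⟩ : ∃ a, a ∈ e := ⟨_, Sym2.out_fst_mem e⟩
  obtain ⟨x, hx, hrx⟩ := p.exists_mem_support_countP_pos hH (hreach e he a ha)
    (Multiset.countP_pos.mpr ⟨e, he, ha⟩)
  obtain ⟨c, hc, hcr⟩ := exists_closed_walk_le_of_even hr heven hrx
  obtain ⟨q, hq⟩ := p.exists_edges_eq_add_of_mem_support hx c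
  set C : Multiset (Sym2 V) := ↑c.edges with hC
  have hsum : (q.edges : Multiset (Sym2 V)) + (r - C) = p.edges + r := by
    rw [hq, add_assoc, add_tsub_cancel_of_le hcr]
  have hcard : Multiset.card (r - C) < n := by
    have hClen : Multiset.card C = c.length := by rw [hC, Multiset.coe_card, Walk.length_edges]
    have := Multiset.card_le_card hcr
    rw [← hn, Multiset.card_sub hcr]
    omega
  have heven' : ∀ x, Even ((r - C).countP (x ∈ ·)) := fun x => by
    rw [Multiset.countP_sub hcr, Nat.even_sub (Multiset.countP_le_of_le _ hcr), hC,
      Multiset.coe_countP]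
    simp [heven x, c.even_countP_edges_iff]
  obtain ⟨q', hq'⟩ := ih _ hcard q (fun e he => hr e (Multiset.mem_of_le tsub_le_self he)) heven'
    (hsum ▸ hH) (fun e he => hreach e (Multiset.mem_of_le tsub_le_self he)) rfl
  exact ⟨q', hq'.trans hsum⟩

theorem Walk.exists_edges_eq_of_even_sub {F : SimpleGraph V} {u v : V} (p : G.Walk u v)
    {m : Multiset (Sym2 V)} (hmp : m ≤ p.edges)
    (heven : ∀ x, Even (((p.edges : Multiset (Sym2 V)) - m).countP (x ∈ ·)))
    (hF : ∀ e ∈ F.edgeSet, e ∈ m) (hFreach : ∀ x ∈ p.support, F.Reachable u x) :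
    ∃ q : G.Walk u v, (q.edges : Multiset (Sym2 V)) = m ∧ p.support ⊆ q.support := by
  have hmG : ∀ e ∈ m, e ∈ G.edgeSet := fun e he =>
    p.edges_subset_edgeSet (Multiset.mem_of_le hmp he)
  obtain ⟨P, hP⟩ := (hFreach v p.end_mem_support).exists_isPath
  let P' := P.transfer G fun e he => hmG e (hF e (P.edges_subset_edgeSet he))
  have hP'm : (P'.edges : Multiset (Sym2 V)) ≤ m := by
    rw [Walk.edges_transfer, Multiset.le_iff_subset (Multiset.coe_nodup.mpr hP.edges_nodup)]
    exact fun e he => hF e (P.edges_subset_edgeSet he)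
  have hsum : (P'.edges : Multiset (Sym2 V)) + (m - P'.edges) = m := add_tsub_cancel_of_le hP'm
  have heven' : ∀ x, Even ((m - P'.edges).countP (x ∈ ·)) := fun x => by
    have h := heven x
    rw [Multiset.countP_sub hmp, Nat.even_sub (Multiset.countP_le_of_le _ hmp)] at h
    rw [Multiset.countP_sub hP'm, Nat.even_sub (Multiset.countP_le_of_le _ hP'm)]
    simp only [Multiset.coe_countP] at h ⊢
    rw [← h, p.even_countP_edges_iff, P'.even_countP_edges_iff]
  obtain ⟨q, hq⟩ := P'.exists_edges_eq_add_of_even F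
    (fun e he => hmG e (Multiset.mem_of_le tsub_le_self he)) heven' (by rwa [hsum])
    fun e he x hx => (hFreach x (p.mem_support_of_mem_edges
      (Multiset.mem_of_le (tsub_le_self.trans hmp) he) hx)).symm
  rw [hsum] at hq
  have hFq : ∀ e ∈ F.edgeSet, e ∈ q.edges := fun e he => by
    rw [← Multiset.mem_coe, hq]
    exact hF e he
  exact ⟨q, hq, fun x hx => q.mem_support_of_reachable hFq (hFreach x hx).symm⟩

theorem Walk.exists_shorter_of_two_mul_lt_length [Fintype V] {u v : V} (p : G.Walk u v)
    (hp : 2 * (Fintype.card V - 1) < p.length) :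
    ∃ q : G.Walk u v, q.length < p.length ∧ p.support ⊆ q.support ∧
      (q.edges : Multiset (Sym2 V)) ≤ p.edges := by
  classical
  have : Nonempty V := ⟨u⟩
  obtain ⟨F, hFp, hFacyc, hFreach⟩ :=
    (fromEdgeSet {e | e ∈ p.edges}).exists_isAcyclic_reachable_eq_le
  have hFle : F.edgeFinset.val ≤ p.edges := by
    refine (Multiset.le_iff_subset F.edgeFinset.nodup).mpr fun e he => ?_
    have := edgeSet_mono hFp (mem_edgeFinset.mp he)
    rw [edgeSet_fromEdgeSet] at this
    exact this.1
  have hFcard := hFacyc.card_edgeFinset_lt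
  have hlen : Multiset.card (p.edges : Multiset (Sym2 V)) = p.length := by simp
  obtain ⟨x, c, hc, hcle⟩ := exists_closed_walk_le_of_card_le (G := G)
    (m := ↑p.edges - F.edgeFinset.val)
    (fun e he => p.edges_subset_edgeSet (Multiset.mem_of_le tsub_le_self he))
    (by rw [Multiset.card_sub hFle, hlen, Finset.card_val]; omega)
  have hcp : (c.edges : Multiset (Sym2 V)) ≤ p.edges := hcle.trans tsub_le_self
  have hFc : F.edgeFinset.val ≤ ↑p.edges - ↑c.edges := by
    rw [le_tsub_iff_left hcp, add_comm, ← le_tsub_iff_left hFle]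
    exact hcle
  obtain ⟨q, hq, hsupp⟩ := p.exists_edges_eq_of_even_sub (F := F) (m := ↑p.edges - ↑c.edges)
    tsub_le_self (fun y => by
      rw [tsub_tsub_cancel_of_le hcp, Multiset.coe_countP]; simp [c.even_countP_edges_iff])
    (fun e he => Multiset.mem_of_le hFc (mem_edgeFinset.mpr he))
    (fun y hy => by rw [hFreach]; exact p.reachable_fromEdgeSet_edges hy)
  refine ⟨q, ?_, hsupp, hq ▸ tsub_le_self⟩
  have := congrArg Multiset.card hq
  rw [Multiset.card_sub hcp, hlen] at this
  simp only [Multiset.coe_card, Walk.length_edges] at this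
  omega

theorem Walk.exists_length_le_two_mul_support_subset [Fintype V] {u v : V} (p : G.Walk u v) :
    ∃ q : G.Walk u v, q.length ≤ 2 * (Fintype.card V - 1) ∧ p.support ⊆ q.support ∧
      (q.edges : Multiset (Sym2 V)) ≤ p.edges := by
  induction hn : p.length using Nat.strong_induction_on generalizing p with
  | _ n ih =>
  by_cases hp : p.length ≤ 2 * (Fintype.card V - 1)
  · exact ⟨p, hp, List.Subset.refl _, le_rfl⟩
  obtain ⟨q, hqp, hsupp, hle⟩ := p.exists_shorter_of_two_mul_lt_length (by omega)
  obtain ⟨q', hq', hsupp', hle'⟩ := ih _ (hn ▸ hqp) q rfl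
  exact ⟨q', hq', List.Subset.trans hsupp hsupp', hle'.trans hle⟩

theorem Connected.exists_walk_forall_mem_support (hconn : G.Connected) (S : Finset V)
    (u v : V) : ∃ p : G.Walk u v, ∀ x ∈ S, x ∈ p.support := by
  induction S using Finset.induction_on with
  | empty => exact ⟨(hconn u v).some, by simp⟩
  | insert x S _ ih =>
    obtain ⟨p, hp⟩ := ih
    let r := (hconn u x).some
    refine ⟨r.append (r.reverse.append p), fun y hy => ?_⟩
    rcases Finset.mem_insert.mp hy with rfl | hy
    · exact (Walk.mem_support_append_iff _ _).mpr (.inl r.end_mem_support)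
    · simp [Walk.mem_support_append_iff, hp y hy]

end SimpleGraph

theorem walkWeight_eq_sum_edges {V : Type*} {G : SimpleGraph V} {w : V → V → ℝ}
    (hsymm : ∀ u v, w u v = w v u) {u v : V} (p : G.Walk u v) :
    walkWeight w p = ((p.edges : Multiset (Sym2 V)).map (Sym2.lift ⟨w, hsymm⟩)).sum := by
  simp [walkWeight, Walk.edges, Function.comp_def, Dart.edge]

theorem walkWeight_le_of_edges_le {V : Type*} {G : SimpleGraph V} {w : V → V → ℝ}
    (hw : ∀ u v, 0 ≤ w u v) (hsymm : ∀ u v, w u v = w v u) {u v : V} {p q : G.Walk u v}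
    (h : (q.edges : Multiset (Sym2 V)) ≤ p.edges) : walkWeight w q ≤ walkWeight w p := by
  obtain ⟨t, ht⟩ := Multiset.le_iff_exists_add.mp h
  rw [walkWeight_eq_sum_edges hsymm, walkWeight_eq_sum_edges hsymm, ht, Multiset.map_add,
    Multiset.sum_add]
  refine le_add_of_nonneg_right (Multiset.sum_nonneg fun x hx => ?_)
  obtain ⟨e, -, rfl⟩ := Multiset.mem_map.mp hx
  induction e using Sym2.ind with
  | h a b => exact hw a b

theorem IsGroupSteiner.of_support_subset {V : Type*} {G : SimpleGraph V} {k : ℕ}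
    {R : Fin k → Set V} {u v : V} {p q : G.Walk u v} (hp : IsGroupSteiner R p)
    (hpq : p.support ⊆ q.support) : IsGroupSteiner R q := fun i =>
  let ⟨x, hxR, hx⟩ := hp i
  ⟨x, hxR, hpq hx⟩

/-- For every pair `s,t` there is a group Steiner path with at most
`2(n-1)` edges whose length equals the group Steiner distance; in particular the infimum
defining `σ_G(s,t)` is attained. -/
theorem stmt_4 {V : Type*} [Fintype V] (G : SimpleGraph V) (hconn : G.Connected)
    (w : V → V → ℝ) (hw : ∀ u v, 0 ≤ w u v) (hsymm : ∀ u v, w u v = w v u)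
    {k : ℕ} (R : Fin k → Set V) (hR : ∀ i, (R i).Nonempty)
    (s t : V) :
    ∃ π : G.Walk s t, IsGroupSteiner R π ∧ π.length ≤ 2 * (Fintype.card V - 1) ∧
      ENNReal.ofReal (walkWeight w π) = gsDist G w R s t := by
  classical
  let N := 2 * (Fintype.card V - 1)
  let S : Set (G.Walk s t) := {π | IsGroupSteiner R π ∧ π.length ≤ N}
  have hS : S.Finite := (Set.toFinite {π : G.Walk s t | π.length < N + 1}).subset
    fun π hπ => Nat.lt_succ_of_le hπ.2
  obtain ⟨p₀, hp₀⟩ := hconn.exists_walk_forall_mem_support Finset.univ s t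
  obtain ⟨q₀, hq₀, hsupp₀, -⟩ := p₀.exists_length_le_two_mul_support_subset
  have hq₀R : IsGroupSteiner R q₀ := fun i =>
    ⟨(hR i).some, (hR i).some_mem, hsupp₀ (hp₀ _ (Finset.mem_univ _))⟩
  obtain ⟨π, ⟨hπ, hπN⟩, hmin⟩ := S.exists_min_image (walkWeight w) hS ⟨q₀, hq₀R, hq₀⟩
  refine ⟨π, hπ, hπN, le_antisymm (le_iInf fun p => ?_) (iInf_le_of_le ⟨π, hπ⟩ le_rfl)⟩
  obtain ⟨q, hqN, hsupp, hqp⟩ := p.1.exists_length_le_two_mul_support_subset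
  exact ENNReal.ofReal_le_ofReal ((hmin q ⟨p.2.of_support_subset hsupp, hqN⟩).trans
    (walkWeight_le_of_edges_le hw hsymm hqp))
end

section
/- Let T be a tree with non-negative real edge weights, let w(T) denote the total weight of its edges, and let W > 0. Then there exists a collection of at most 2·(w(T)/W + 1) pairwise edge-disjoint subtrees of T ('micro-trees'), each of total edge weight at most W, whose union contains every vertex of T. -/
open SimpleGraph ENNReal

/-- Total weight of a set of edges (for a symmetric weight function). -/
noncomputable def edgesWeight {V : Type*} (w : V → V → ℝ) (hs : ∀ a b, w a b = w b a)
    (E : Set (Sym2 V)) : ℝ :=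
  ∑ᶠ e ∈ E, Sym2.lift ⟨w, hs⟩ e

/-!
Root the tree and charge to every other vertex `x` the weight of the edge from `x` to its parent.
A vertex set `A` hanging from a top vertex `a` (every other vertex of `A` has its parent in `A`)
induces a connected subgraph whose weight is the total charge of `A \ {a}`.

While the remaining rooted tree weighs more than `W`, pick a deepest vertex `v` whose proper
descendants carry charge more than `W / 2`; the proper descendants of each child of `v` carry at
most `W / 2`. If the branch of one child carries more than `W / 2` on its own, it is cut off as a
piece, dropping its edge to `v`. Otherwise greedily collecting child branches gives total charge
in `(W / 2, W]`, and these branches are cut off together with `v`. Each piece removes charge more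
than `W / 2` and shares at most the vertex `v` with what remains, which gives at most
`2 w(T) / W + 1` pieces.
-/

theorem Finset.exists_subset_sum_mem_Ioc {ι M : Type*} [AddCommMonoid M] [LinearOrder M]
    [IsOrderedAddMonoid M] {s : Finset ι} {g : ι → M} {c : M} (hc : 0 ≤ c)
    (hg : ∀ i ∈ s, g i ≤ c) (hs : c < ∑ i ∈ s, g i) :
    ∃ J ⊆ s, ∑ i ∈ J, g i ∈ Set.Ioc c (c + c) := by
  classical
  induction s using Finset.induction_on with
  | empty => exact absurd hs (by simpa using hc)
  | insert i s hi ih =>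
    rw [Finset.sum_insert hi] at hs
    by_cases h : c < ∑ j ∈ s, g j
    · obtain ⟨J, hJ, hJ'⟩ := ih (fun j hj => hg j (Finset.mem_insert_of_mem hj)) h
      exact ⟨J, hJ.trans (Finset.subset_insert _ _), hJ'⟩
    · refine ⟨insert i s, subset_rfl, ?_⟩
      rw [Finset.sum_insert hi]
      exact ⟨hs, add_le_add (hg i (Finset.mem_insert_self _ _)) (not_lt.1 h)⟩

lemma SimpleGraph.Subgraph.disjoint_edgeSet_induce_top {V : Type*} {G : SimpleGraph V}
    {s s' : Set V} (h : (s ∩ s').Subsingleton) :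
    Disjoint ((⊤ : G.Subgraph).induce s).edgeSet ((⊤ : G.Subgraph).induce s').edgeSet := by
  rw [Set.disjoint_left]
  intro e he he'
  induction e using Sym2.ind with | h x y =>
  simp only [Subgraph.mem_edgeSet, Subgraph.induce_adj, Subgraph.top_adj] at he he'
  exact he.2.2.ne (h ⟨he.1, he'.1⟩ ⟨he.2.1, he'.2.1⟩)

/-- A rooted tree on `V` given by parent pointers; `depth` witnesses that following parents
terminates at the root. The parent of the root is irrelevant. -/
structure ParentMap (V : Type*) where
  root : V
  parent : V → V
  depth : V → ℕ
  depth_parent_lt : ∀ x, x ≠ root → depth (parent x) < depth x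

namespace ParentMap

variable {V : Type*} (t : ParentMap V)

open Classical

def IsChild (x v : V) : Prop := x ≠ t.root ∧ t.parent x = v

def IsDescendant : V → V → Prop := Relation.ReflTransGen t.IsChild

def graph : SimpleGraph V := SimpleGraph.fromRel t.IsChild

def IsSubtreeAt (A : Finset V) (a : V) : Prop :=
  a ∈ A ∧ ∀ x ∈ A, x ≠ a → x ≠ t.root ∧ t.parent x ∈ A

noncomputable def branch (U : Finset V) (v : V) : Finset V := U.filter (t.IsDescendant · v)

noncomputable def children (U : Finset V) (v : V) : Finset V := U.filter (t.IsChild · v)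

/-- `R` is removed from `U`, and `A` is the piece cut off with it. -/
def IsCut (U R A : Finset V) (a : V) : Prop :=
  R ⊆ U.erase t.root ∧ t.IsSubtreeAt (U \ R) t.root ∧ t.IsSubtreeAt A a ∧ R ⊆ A ∧
    A ⊆ insert a R ∧ A ⊆ U

/-- Pieces sharing at most one vertex induce edge-disjoint subgraphs. -/
def IsCover (f : V → ℝ) (W : ℝ) (U : Finset V) (𝒜 : Finset (Finset V)) : Prop :=
  (∀ A ∈ 𝒜, A ⊆ U ∧ ∃ a, t.IsSubtreeAt A a ∧ ∑ x ∈ A.erase a, f x ≤ W) ∧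
    (𝒜 : Set (Finset V)).Pairwise (fun A B => ((A : Set V) ∩ B).Subsingleton) ∧
    ∀ x ∈ U, ∃ A ∈ 𝒜, x ∈ A

variable {t} {x y u v a : V} {A J R U : Finset V} {f : V → ℝ} {W : ℝ}

theorem induction {Q : V → Prop} (h : ∀ x, (x ≠ t.root → Q (t.parent x)) → Q x) (x : V) :
    Q x := by
  induction hx : t.depth x using Nat.strong_induction_on generalizing x with
  | _ n ih => exact h x fun hxr => ih _ (hx ▸ t.depth_parent_lt x hxr) _ rfl

lemma IsChild.depth_lt (h : t.IsChild x v) : t.depth v < t.depth x :=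
  h.2 ▸ t.depth_parent_lt x h.1

lemma IsChild.ne (h : t.IsChild x v) : x ≠ v := by
  rintro rfl
  exact h.depth_lt.false

lemma isChild_rightUnique : Relator.RightUnique t.IsChild := fun _ _ _ h h' => h.2.symm.trans h'.2

lemma IsDescendant.depth_le (h : t.IsDescendant x v) : t.depth v ≤ t.depth x := by
  induction h with
  | refl => exact le_rfl
  | tail _ hc ih => exact hc.depth_lt.le.trans ih

lemma IsChild.not_isDescendant (h : t.IsChild u v) : ¬ t.IsDescendant v u :=
  fun h' => not_le.2 h.depth_lt h'.depth_le

lemma IsDescendant.eq_of_isChild (h : t.IsDescendant x y) (hx : t.IsChild x v)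
    (hy : t.IsChild y v) : x = y := by
  rcases Relation.ReflTransGen.cases_head h with rfl | ⟨c, hxc, hcy⟩
  · rfl
  · cases isChild_rightUnique hx hxc
    exact absurd hcy hy.not_isDescendant

lemma isDescendant_root_iff : t.IsDescendant t.root v ↔ v = t.root := by
  refine ⟨fun h => ?_, fun h => h ▸ .refl⟩
  rcases Relation.ReflTransGen.cases_head h with h | ⟨c, hc, -⟩
  · exact h.symm
  · exact absurd rfl hc.1

lemma IsSubtreeAt.isDescendant (hA : t.IsSubtreeAt A a) (hx : x ∈ A) : t.IsDescendant x a := by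
  induction x using ParentMap.induction (t := t) with | h x ih =>
  by_cases hxa : x = a
  · exact hxa ▸ .refl
  · obtain ⟨hxr, hpx⟩ := hA.2 x hx hxa
    exact .head ⟨hxr, rfl⟩ (ih hxr hpx)

lemma IsSubtreeAt.not_isChild_top (hA : t.IsSubtreeAt A a) (hy : y ∈ A) : ¬ t.IsChild a y :=
  fun h => h.not_isDescendant (hA.isDescendant hy)

lemma mem_branch : x ∈ t.branch U v ↔ x ∈ U ∧ t.IsDescendant x v := Finset.mem_filter

lemma mem_children : u ∈ t.children U v ↔ u ∈ U ∧ t.IsChild u v := Finset.mem_filter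

lemma branch_subset : t.branch U v ⊆ U := Finset.filter_subset _ _

lemma biUnion_branch_subset : J.biUnion (t.branch U) ⊆ U :=
  Finset.biUnion_subset.2 fun _ _ => branch_subset

lemma root_notMem_biUnion_branch (hJ : t.root ∉ J) : t.root ∉ J.biUnion (t.branch U) := by
  simp only [Finset.mem_biUnion, mem_branch, isDescendant_root_iff]
  rintro ⟨u, hu, -, rfl⟩
  exact hJ hu

lemma pairwiseDisjoint_branch_children (U : Finset V) (v : V) :
    (t.children U v : Set V).PairwiseDisjoint (t.branch U) := by
  intro u hu u' hu' hne
  simp only [Finset.mem_coe, mem_children] at hu hu'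
  refine Finset.disjoint_left.2 fun x hx hx' => hne ?_
  rcases Relation.ReflTransGen.total_of_right_unique isChild_rightUnique
    (mem_branch.1 hx).2 (mem_branch.1 hx').2 with h | h
  · exact IsDescendant.eq_of_isChild h hu.2 hu'.2
  · exact (IsDescendant.eq_of_isChild h hu'.2 hu.2).symm

section RootClosed

variable (hU : t.IsSubtreeAt U t.root)
include hU

lemma IsSubtreeAt.mem_of_isDescendant (hx : x ∈ U) (h : t.IsDescendant x y) : y ∈ U := by
  induction h with
  | refl => exact hx
  | tail _ hc ih => exact hc.2 ▸ (hU.2 _ ih hc.1).2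

lemma IsSubtreeAt.branch_root : t.branch U t.root = U :=
  Finset.filter_true_of_mem fun _ => hU.isDescendant

lemma IsSubtreeAt.isSubtreeAt_branch (hv : v ∈ U) : t.IsSubtreeAt (t.branch U v) v := by
  refine ⟨mem_branch.2 ⟨hv, .refl⟩, fun x hx hxv => ?_⟩
  obtain ⟨hxU, hxv'⟩ := mem_branch.1 hx
  rcases Relation.ReflTransGen.cases_head hxv' with h | ⟨c, hxc, hcv⟩
  · exact absurd h hxv
  · obtain ⟨hxr, rfl⟩ := hxc
    exact ⟨hxr, mem_branch.2 ⟨(hU.2 x hxU hxr).2, hcv⟩⟩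

lemma IsSubtreeAt.erase_branch_eq_biUnion (v : V) :
    (t.branch U v).erase v = (t.children U v).biUnion (t.branch U) := by
  ext x
  simp only [Finset.mem_erase, Finset.mem_biUnion, mem_branch, mem_children]
  constructor
  · rintro ⟨hxv, hxU, hdesc⟩
    obtain ⟨u, hxu, huv⟩ := Relation.TransGen.tail'_iff.1
      ((Relation.reflTransGen_iff_eq_or_transGen.1 hdesc).resolve_left hxv.symm)
    exact ⟨u, ⟨hU.mem_of_isDescendant hxU hxu, huv⟩, hxU, hxu⟩
  · rintro ⟨u, ⟨-, huv⟩, hxU, hxu⟩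
    exact ⟨by rintro rfl; exact huv.not_isDescendant hxu, hxU, hxu.tail huv⟩

lemma IsSubtreeAt.sdiff_biUnion_branch (hJ : t.root ∉ J) :
    t.IsSubtreeAt (U \ J.biUnion (t.branch U)) t.root := by
  refine ⟨Finset.mem_sdiff.2 ⟨hU.1, root_notMem_biUnion_branch hJ⟩, fun x hx hxr => ?_⟩
  obtain ⟨hxU, hxR⟩ := Finset.mem_sdiff.1 hx
  refine ⟨hxr, Finset.mem_sdiff.2 ⟨(hU.2 x hxU hxr).2, fun hp => hxR ?_⟩⟩
  simp only [Finset.mem_biUnion, mem_branch] at hp ⊢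
  obtain ⟨u, hu, -, hpu⟩ := hp
  exact ⟨u, hu, hxU, .head ⟨hxr, rfl⟩ hpu⟩

lemma IsSubtreeAt.isCut_branch (hu : u ∈ U) (hur : u ≠ t.root) :
    t.IsCut U (t.branch U u) (t.branch U u) u := by
  have hJ : t.root ∉ ({u} : Finset V) := by simpa [eq_comm] using hur
  have hR := root_notMem_biUnion_branch (U := U) hJ
  have hU' := hU.sdiff_biUnion_branch hJ
  rw [Finset.singleton_biUnion] at hR hU'
  exact ⟨fun x hx => Finset.mem_erase.2 ⟨ne_of_mem_of_not_mem hx hR, branch_subset hx⟩, hU',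
    hU.isSubtreeAt_branch hu, subset_rfl, Finset.subset_insert _ _, branch_subset⟩

lemma IsSubtreeAt.isCut_children (hv : v ∈ U) (hJ : J ⊆ t.children U v) :
    t.IsCut U (J.biUnion (t.branch U)) (insert v (J.biUnion (t.branch U))) v := by
  have hJr : t.root ∉ J := fun h => (mem_children.1 (hJ h)).2.1 rfl
  refine ⟨fun x hx => Finset.mem_erase.2 ⟨?_, biUnion_branch_subset hx⟩,
    hU.sdiff_biUnion_branch hJr, ⟨Finset.mem_insert_self _ _, fun x hx hxv => ?_⟩,
    Finset.subset_insert _ _, subset_rfl, Finset.insert_subset hv biUnion_branch_subset⟩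
  · rintro rfl
    exact root_notMem_biUnion_branch hJr hx
  · obtain ⟨u, huJ, hxu⟩ := Finset.mem_biUnion.1 ((Finset.mem_insert.1 hx).resolve_left hxv)
    obtain ⟨huU, huv⟩ := mem_children.1 (hJ huJ)
    by_cases hxu' : x = u
    · subst hxu'
      exact ⟨huv.1, huv.2 ▸ Finset.mem_insert_self _ _⟩
    · obtain ⟨hxr, hpx⟩ := (hU.isSubtreeAt_branch huU).2 x hxu hxu'
      exact ⟨hxr, Finset.mem_insert_of_mem (Finset.mem_biUnion.2 ⟨u, huJ, hpx⟩)⟩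

theorem IsSubtreeAt.exists_cut (f : V → ℝ) (hW : 0 ≤ W)
    (heavy : W / 2 < ∑ x ∈ U.erase t.root, f x) :
    ∃ R A a, t.IsCut U R A a ∧ ∑ x ∈ A.erase a, f x ≤ W ∧ W / 2 < ∑ x ∈ R, f x := by
  set H := U.filter fun v => W / 2 < ∑ x ∈ (t.branch U v).erase v, f x
  have hrootH : t.root ∈ H := Finset.mem_filter.2 ⟨hU.1, by rwa [hU.branch_root]⟩
  obtain ⟨v, hvH, hdeepest⟩ := H.exists_max_image t.depth ⟨_, hrootH⟩
  obtain ⟨hv, hvheavy⟩ := Finset.mem_filter.1 hvH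
  have hlight : ∀ u ∈ t.children U v, ∑ x ∈ (t.branch U u).erase u, f x ≤ W / 2 := by
    intro u hu
    obtain ⟨huU, huv⟩ := mem_children.1 hu
    by_contra! h
    exact absurd (hdeepest u (Finset.mem_filter.2 ⟨huU, h⟩)) (not_le.2 huv.depth_lt)
  rw [hU.erase_branch_eq_biUnion, Finset.sum_biUnion (pairwiseDisjoint_branch_children U v)]
    at hvheavy
  by_cases hbig : ∃ u ∈ t.children U v, W / 2 < ∑ x ∈ t.branch U u, f x
  · obtain ⟨u, hu, hbig⟩ := hbig
    obtain ⟨huU, huv⟩ := mem_children.1 hu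
    exact ⟨_, _, _, hU.isCut_branch huU huv.1, (hlight u hu).trans (half_le_self hW), hbig⟩
  · push Not at hbig
    obtain ⟨J, hJ, hJlo, hJhi⟩ :=
      Finset.exists_subset_sum_mem_Ioc (by positivity) hbig hvheavy
    have hR : ∑ x ∈ J.biUnion (t.branch U), f x = ∑ u ∈ J, ∑ x ∈ t.branch U u, f x :=
      Finset.sum_biUnion ((pairwiseDisjoint_branch_children U v).subset hJ)
    have hvR : v ∉ J.biUnion (t.branch U) := by
      simp only [Finset.mem_biUnion, mem_branch, not_exists, not_and]
      exact fun u hu _ => (mem_children.1 (hJ hu)).2.not_isDescendant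
    refine ⟨_, _, _, hU.isCut_children hv hJ, ?_, hR ▸ hJlo⟩
    rw [Finset.erase_insert hvR, hR]
    linarith

lemma IsSubtreeAt.isCover_singleton (hW : ∑ x ∈ U.erase t.root, f x ≤ W) :
    t.IsCover f W U {U} :=
  ⟨by simpa using ⟨_, hU, hW⟩, by simp, fun _ hx => ⟨U, Finset.mem_singleton_self U, hx⟩⟩

end RootClosed

lemma IsCut.sum_erase_root (h : t.IsCut U R A a) (f : V → ℝ) :
    ∑ x ∈ U.erase t.root, f x = ∑ x ∈ (U \ R).erase t.root, f x + ∑ x ∈ R, f x := by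
  rw [← Finset.erase_sdiff_comm, Finset.sum_sdiff h.1]

lemma IsCut.isCover_insert {𝒜 : Finset (Finset V)} (h : t.IsCut U R A a)
    (hA : ∑ x ∈ A.erase a, f x ≤ W) (h𝒜 : t.IsCover f W (U \ R) 𝒜) :
    t.IsCover f W U (insert A 𝒜) := by
  obtain ⟨-, -, hAa, hRA, hAR, hAU⟩ := h
  obtain ⟨hpieces, hdisj, hcover⟩ := h𝒜
  have hAB : ∀ B ∈ 𝒜, ((A : Set V) ∩ B).Subsingleton := by
    refine fun B hB => (Set.subsingleton_singleton (a := a)).anti fun x ⟨hxA, hxB⟩ => ?_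
    have hxR : x ∉ R := (Finset.mem_sdiff.1 ((hpieces B hB).1 hxB)).2
    exact (Finset.mem_insert.1 (hAR hxA)).resolve_right hxR
  refine ⟨fun B hB => ?_, ?_, fun x hx => ?_⟩
  · rcases Finset.mem_insert.1 hB with rfl | hB
    · exact ⟨hAU, a, hAa, hA⟩
    · exact ⟨(hpieces B hB).1.trans Finset.sdiff_subset, (hpieces B hB).2⟩
  · rw [Finset.coe_insert, Set.pairwise_insert]
    exact ⟨hdisj, fun B hB _ => ⟨hAB B hB, Set.inter_comm (B : Set V) A ▸ hAB B hB⟩⟩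
  · by_cases hxR : x ∈ R
    · exact ⟨A, Finset.mem_insert_self _ _, hRA hxR⟩
    · obtain ⟨B, hB, hxB⟩ := hcover x (Finset.mem_sdiff.2 ⟨hx, hxR⟩)
      exact ⟨B, Finset.mem_insert_of_mem hB, hxB⟩

theorem IsSubtreeAt.exists_isCover (hf : ∀ x, 0 ≤ f x) (hW : 0 < W)
    (hU : t.IsSubtreeAt U t.root) :
    ∃ 𝒜, t.IsCover f W U 𝒜 ∧ (𝒜.card : ℝ) ≤ 2 * (∑ x ∈ U.erase t.root, f x) / W + 1 := by
  induction U using Finset.strongInduction with | H U ih =>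
  by_cases hlight : ∑ x ∈ U.erase t.root, f x ≤ W
  · refine ⟨{U}, hU.isCover_singleton hlight, ?_⟩
    have : 0 ≤ 2 * (∑ x ∈ U.erase t.root, f x) / W :=
      div_nonneg (mul_nonneg zero_le_two (Finset.sum_nonneg fun x _ => hf x)) hW.le
    simpa using this
  obtain ⟨R, A, a, hcut, hA, hR⟩ := hU.exists_cut f hW.le (by linarith)
  have hRne : R.Nonempty := Finset.nonempty_of_sum_ne_zero (f := f) (by linarith)
  obtain ⟨𝒜, h𝒜, hcard⟩ :=
    ih (U \ R) (Finset.sdiff_ssubset (hcut.1.trans (Finset.erase_subset _ _)) hRne) hcut.2.1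
  refine ⟨insert A 𝒜, hcut.isCover_insert hA h𝒜, ?_⟩
  have hpiece : 1 < 2 * (∑ x ∈ R, f x) / W := by
    rw [lt_div_iff₀ hW]
    linarith
  have hinsert : ((insert A 𝒜).card : ℝ) ≤ 𝒜.card + 1 := by
    exact_mod_cast Finset.card_insert_le A 𝒜
  rw [hcut.sum_erase_root f, mul_add, add_div]
  linarith

lemma graph_adj : t.graph.Adj x y ↔ x ≠ y ∧ (t.IsChild x y ∨ t.IsChild y x) :=
  fromRel_adj _ _ _

lemma IsChild.adj (h : t.IsChild x y) : t.graph.Adj x y := graph_adj.2 ⟨h.ne, .inl h⟩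

lemma IsSubtreeAt.connected_induce (hA : t.IsSubtreeAt A a) :
    ((⊤ : t.graph.Subgraph).induce (A : Set V)).Connected := by
  rw [← connected_induce_iff, connected_iff_exists_forall_reachable]
  refine ⟨⟨a, hA.1⟩, fun ⟨x, hx⟩ => ?_⟩
  induction x using ParentMap.induction (t := t) with | h x ih =>
  by_cases hxa : x = a
  · subst hxa
    rfl
  · obtain ⟨hxr, hpx⟩ := hA.2 x hx hxa
    exact (ih hxr hpx).trans (Adj.reachable (IsChild.adj ⟨hxr, rfl⟩).symm)

lemma IsSubtreeAt.edgeSet_induce (hA : t.IsSubtreeAt A a) :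
    ((⊤ : t.graph.Subgraph).induce (A : Set V)).edgeSet
      = (fun x => s(x, t.parent x)) '' ↑(A.erase a) := by
  ext e
  induction e using Sym2.ind with | h x y =>
  simp only [Subgraph.mem_edgeSet, Subgraph.induce_adj, Subgraph.top_adj, Set.mem_image,
    Finset.coe_erase, Set.mem_sdiff, Finset.mem_coe, Set.mem_singleton_iff]
  constructor
  · rintro ⟨hx, hy, hxy⟩
    rcases (graph_adj.1 hxy).2 with hxy | hyx
    · exact ⟨x, ⟨hx, fun h => hA.not_isChild_top hy (h ▸ hxy)⟩, by rw [hxy.2]⟩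
    · exact ⟨y, ⟨hy, fun h => hA.not_isChild_top hx (h ▸ hyx)⟩, by rw [hyx.2, Sym2.eq_swap]⟩
  · rintro ⟨z, ⟨hz, hza⟩, hze⟩
    obtain ⟨hzr, hpz⟩ := hA.2 z hz hza
    rcases Sym2.eq_iff.1 hze with ⟨rfl, rfl⟩ | ⟨rfl, rfl⟩
    · exact ⟨hz, hpz, IsChild.adj ⟨hzr, rfl⟩⟩
    · exact ⟨hpz, hz, (IsChild.adj ⟨hzr, rfl⟩).symm⟩

lemma injOn_parentEdge : Set.InjOn (fun x => s(x, t.parent x)) {x | x ≠ t.root} := by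
  intro x hx y hy h
  rcases Sym2.eq_iff.1 h with ⟨h, -⟩ | ⟨hxy, hyx⟩
  · exact h
  · exact absurd ((IsChild.depth_lt ⟨hy, hxy.symm⟩).trans (IsChild.depth_lt ⟨hx, hyx⟩))
      (lt_irrefl _)

lemma IsSubtreeAt.edgesWeight_induce (hA : t.IsSubtreeAt A a) (w : V → V → ℝ)
    (hsymm : ∀ u v, w u v = w v u) :
    edgesWeight w hsymm ((⊤ : t.graph.Subgraph).induce (A : Set V)).edgeSet
      = ∑ x ∈ A.erase a, w x (t.parent x) := by
  rw [edgesWeight, hA.edgeSet_induce, finsum_mem_image, finsum_mem_coe_finset]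
  · rfl
  · refine injOn_parentEdge.mono fun x hx => ?_
    obtain ⟨hxa, hxA⟩ := Finset.mem_erase.1 hx
    exact (hA.2 x hxA hxa).1

variable [Fintype V]

lemma isSubtreeAt_univ : t.IsSubtreeAt Finset.univ t.root :=
  ⟨Finset.mem_univ _, fun _ _ hx => ⟨hx, Finset.mem_univ _⟩⟩

lemma edgesWeight_graph (w : V → V → ℝ) (hsymm : ∀ u v, w u v = w v u) :
    edgesWeight w hsymm t.graph.edgeSet = ∑ x ∈ Finset.univ.erase t.root, w x (t.parent x) := by
  have := (isSubtreeAt_univ (t := t)).edgesWeight_induce w hsymm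
  rwa [Finset.coe_univ, ← Subgraph.verts_top, Subgraph.induce_self_verts,
    Subgraph.edgeSet_top] at this

theorem exists_subtree_cover (w : V → V → ℝ) (hw : ∀ u v, 0 ≤ w u v)
    (hsymm : ∀ u v, w u v = w v u) (hW : 0 < W) :
    ∃ 𝒯 : Finset t.graph.Subgraph,
      (∀ S ∈ 𝒯, S.Connected) ∧
      (∀ S ∈ 𝒯, ∀ S' ∈ 𝒯, S ≠ S' → S.edgeSet ∩ S'.edgeSet = ∅) ∧
      (∀ S ∈ 𝒯, edgesWeight w hsymm S.edgeSet ≤ W) ∧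
      (∀ v : V, ∃ S ∈ 𝒯, v ∈ S.verts) ∧
      (𝒯.card : ℝ) ≤ 2 * edgesWeight w hsymm t.graph.edgeSet / W + 1 := by
  obtain ⟨𝒜, ⟨hpieces, hdisj, hcover⟩, hcard⟩ :=
    isSubtreeAt_univ.exists_isCover (f := fun x => w x (t.parent x)) (fun _ => hw _ _) hW
  set S : Finset V → t.graph.Subgraph := fun A => (⊤ : t.graph.Subgraph).induce (A : Set V)
  refine ⟨𝒜.image S, ?_, ?_, ?_, fun v => ?_, ?_⟩
  · simp only [Finset.forall_mem_image]
    intro A hA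
    obtain ⟨-, a, hAa, -⟩ := hpieces A hA
    exact hAa.connected_induce
  · simp only [Finset.forall_mem_image]
    intro A hA B hB hne
    exact Set.disjoint_iff_inter_eq_empty.1
      (Subgraph.disjoint_edgeSet_induce_top (hdisj hA hB fun h => hne (by rw [h])))
  · simp only [Finset.forall_mem_image]
    intro A hA
    obtain ⟨-, a, hAa, hAW⟩ := hpieces A hA
    exact (hAa.edgesWeight_induce w hsymm).trans_le hAW
  · obtain ⟨A, hA, hv⟩ := hcover v (Finset.mem_univ v)
    exact ⟨S A, Finset.mem_image_of_mem S hA, hv⟩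
  · rw [edgesWeight_graph]
    exact le_trans (by exact_mod_cast Finset.card_image_le) hcard

end ParentMap

/-- Root the tree anywhere; the parent of `x` is the second vertex of the path from `x` to the
root, and its depth is the length of that path. -/
theorem SimpleGraph.IsTree.exists_parentMap {V : Type*} {T : SimpleGraph V} (hT : T.IsTree) :
    ∃ t : ParentMap V, t.graph = T := by
  classical
  obtain ⟨r⟩ := hT.connected.nonempty
  choose P hP huniq using fun x => hT.existsUnique_path x r
  have hnil : ∀ x, x ≠ r → ¬ (P x).Nil := fun x hx => Walk.not_nil_of_ne hx
  have hsnd : ∀ x, P (P x).snd = (P x).tail := fun x => (huniq _ _ (hP x).tail).symm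
  refine ⟨⟨r, fun x => (P x).snd, fun x => (P x).length, fun x hx => ?_⟩, ?_⟩
  · simp only [hsnd, ← Walk.length_tail_add_one (hnil x hx)]
    omega
  ext x y
  simp only [ParentMap.graph_adj, ParentMap.IsChild]
  constructor
  · rintro ⟨-, ⟨hx, rfl⟩ | ⟨hy, rfl⟩⟩
    · exact Walk.adj_snd (hnil x hx)
    · exact (Walk.adj_snd (hnil y hy)).symm
  · intro h
    refine ⟨h.ne, ?_⟩
    by_cases hy : y ∈ (P x).support
    · have htake : (P x).takeUntil y hy = .cons h .nil :=
        (hT.existsUnique_path x y).unique ((hP x).takeUntil hy) (by simp [h.ne])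
      have hx : x ≠ r := by
        rintro rfl
        rw [← huniq _ .nil .nil] at hy
        exact h.ne (List.mem_singleton.1 hy).symm
      left
      refine ⟨hx, ?_⟩
      rw [← Walk.take_spec (P x) hy, htake, Walk.cons_append, Walk.nil_append, Walk.snd_cons]
    · right
      refine ⟨fun hyr => hy (hyr ▸ (P x).end_mem_support), ?_⟩
      rw [← huniq y _ ((hP x).cons hy (h := h.symm)), Walk.snd_cons]

/-- Every weighted tree `T` can be covered by at most `2·(w(T)/W + 1)`
pairwise edge-disjoint subtrees ('micro-trees'), each of weight at most `W`, whose union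
contains every vertex of `T`. -/
theorem stmt_8 {V : Type*} [Fintype V] (T : SimpleGraph V) (hT : T.IsTree)
    (w : V → V → ℝ) (hw : ∀ u v, 0 ≤ w u v) (hsymm : ∀ u v, w u v = w v u)
    (W : ℝ) (hW : 0 < W) :
    ∃ 𝒯 : Finset T.Subgraph,
      (∀ S ∈ 𝒯, S.Connected) ∧
      (∀ S ∈ 𝒯, ∀ S' ∈ 𝒯, S ≠ S' → S.edgeSet ∩ S'.edgeSet = ∅) ∧
      (∀ S ∈ 𝒯, edgesWeight w hsymm S.edgeSet ≤ W) ∧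
      (∀ v : V, ∃ S ∈ 𝒯, v ∈ S.verts) ∧
      (𝒯.card : ℝ) ≤ 2 * (edgesWeight w hsymm T.edgeSet / W + 1) := by
  obtain ⟨t, rfl⟩ := hT.exists_parentMap
  obtain ⟨𝒯, hconn, hdisj, hweight, hcover, hcard⟩ := t.exists_subtree_cover w hw hsymm hW
  refine ⟨𝒯, hconn, hdisj, hweight, hcover, hcard.trans ?_⟩
  rw [mul_add, mul_div_assoc]
  linarith
end

section
/- Let T be a tree with non-negative real edge weights, let w(T) denote its total edge weight, let d_T denote the (weighted) tree distance, and let c_s, c_t be two (not necessarily distinct) vertices of T. Then there exists a walk in T from c_s to c_t that visits every vertex of T and whose length is exactly 2·w(T) − d_T(c_s, c_t). -/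
open SimpleGraph ENNReal

/-! Call a walk from `c_s` to `c_t` that visits every vertex and has length
`2 w(T) - d_T(c_s, c_t)` a tour. Induct on the number of vertices, deleting a leaf `ℓ ≠ c_t` with
neighbour `u`, which lowers `w(T)` by `w(ℓu)`. If `c_s ≠ ℓ`, a tour of `T - ℓ` passes through `u`,
and the detour `u ℓ u` adds `2 w(ℓu)`. If `c_s = ℓ`, the path from `c_s` to `c_t` starts with the
edge `ℓu`, so prepending `ℓu` to a tour of `T - ℓ` from `u` gives a tour of `T`. -/

section walkWeight

variable {V : Type*} {G : SimpleGraph V} (w : V → V → ℝ)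

@[simp]
lemma walkWeight_nil {u : V} : walkWeight w (Walk.nil : G.Walk u u) = 0 := rfl

@[simp]
lemma walkWeight_cons {u v x : V} (h : G.Adj u v) (p : G.Walk v x) :
    walkWeight w (Walk.cons h p) = w u v + walkWeight w p := by
  simp [walkWeight]

@[simp]
lemma walkWeight_append {u v x : V} (p : G.Walk u v) (p' : G.Walk v x) :
    walkWeight w (p.append p') = walkWeight w p + walkWeight w p' := by
  simp [walkWeight, Walk.darts_append]

lemma walkWeight_map {W : Type*} {G' : SimpleGraph W} (f : G →g G') (w : W → W → ℝ) {u v : V}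
    (p : G.Walk u v) : walkWeight w (p.map f) = walkWeight (fun a b => w (f a) (f b)) p := by
  simp [walkWeight, Walk.darts_map, Function.comp_def]

end walkWeight

namespace SimpleGraph

variable {V : Type*}

lemma Walk.exists_detour {G : SimpleGraph V} (w : V → V → ℝ) {a b u v : V} (p : G.Walk a b)
    (hu : u ∈ p.support) (huv : G.Adj u v) :
    ∃ p' : G.Walk a b, (∀ x, x ∈ p'.support ↔ x = v ∨ x ∈ p.support) ∧
      walkWeight w p' = walkWeight w p + w u v + w v u := by
  classical
  refine ⟨(p.takeUntil u hu).append (.cons huv (.cons huv.symm (p.dropUntil u hu))), ?_, ?_⟩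
  · intro x
    conv_rhs => rw [← p.take_spec hu]
    have hu' := (p.dropUntil u hu).start_mem_support
    simp only [Walk.mem_support_append_iff, Walk.support_cons, List.mem_cons]
    grind
  · conv_rhs => rw [← p.take_spec hu]
    simp only [walkWeight_append, walkWeight_cons]
    ring

section leaf

variable {T : SimpleGraph V} {ℓ u : V}

lemma IsTree.exists_leaf_ne [Finite V] [Nontrivial V] (hT : T.IsTree) (v : V) :
    ∃ ℓ u, ℓ ≠ v ∧ ∀ x, T.Adj ℓ x ↔ x = u := by
  classical
  have := Fintype.ofFinite V
  obtain ⟨a, b, hab, ha, hb⟩ := hT.exists_ne_and_degree_eq_one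
  obtain ⟨ℓ, hℓ, hℓv⟩ : ∃ ℓ, T.degree ℓ = 1 ∧ ℓ ≠ v := by
    by_cases hav : a = v
    · exact ⟨b, hb, hav ▸ hab.symm⟩
    · exact ⟨a, ha, hav⟩
  obtain ⟨u, hu, huniq⟩ := degree_eq_one_iff_existsUnique_adj.mp hℓ
  exact ⟨ℓ, u, hℓv, fun x => ⟨huniq x, fun h => h ▸ hu⟩⟩

lemma IsTree.induce_compl_singleton_of_adj_iff (hT : T.IsTree) (hℓ : ∀ x, T.Adj ℓ x ↔ x = u) :
    (T.induce {ℓ}ᶜ).IsTree := by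
  have hN : T.neighborSet ℓ = {u} := Set.ext hℓ
  have : Fintype (T.neighborSet ℓ) := hN ▸ inferInstance
  have hdeg : T.degree ℓ = 1 :=
    degree_eq_one_iff_existsUnique_adj.mpr ⟨u, (hℓ u).2 rfl, fun x => (hℓ x).1⟩
  exact ⟨hT.connected.induce_compl_singleton_of_degree_eq_one hdeg, hT.isAcyclic.induce _⟩

lemma IsAcyclic.exists_isPath_induce_map_eq {G : SimpleGraph V} (hG : G.IsAcyclic) {s : Set V}
    (hs : (G.induce s).Preconnected) {a b : V} (ha : a ∈ s) (hb : b ∈ s) (q : G.Walk a b)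
    (hq : q.IsPath) :
    ∃ q' : (G.induce s).Walk ⟨a, ha⟩ ⟨b, hb⟩,
      q'.IsPath ∧ q'.map (Embedding.induce s).toHom = q := by
  obtain ⟨q', hq'⟩ := hs.exists_isPath ⟨a, ha⟩ ⟨b, hb⟩
  have hmap : (q'.map (Embedding.induce s).toHom).IsPath := hq'.map Subtype.val_injective
  exact ⟨q', hq', congrArg Subtype.val ((hG.subsingleton_path a b).elim ⟨_, hmap⟩ ⟨q, hq⟩)⟩

lemma Walk.mem_support_map_induce {G : SimpleGraph V} {s : Set V} {a b : s}
    {p : (G.induce s).Walk a b} {v : V} (hv : v ∈ s) (hp : ⟨v, hv⟩ ∈ p.support) :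
    v ∈ (p.map (Embedding.induce s).toHom).support := by
  rw [Walk.support_map]
  exact List.mem_map_of_mem hp

lemma edgeSet_eq_insert_image_induce_compl (hℓ : ∀ x, T.Adj ℓ x ↔ x = u) :
    T.edgeSet = insert s(ℓ, u) (Sym2.map Subtype.val '' (T.induce {ℓ}ᶜ).edgeSet) := by
  ext e
  induction e using Sym2.ind with
  | _ a b =>
    simp only [mem_edgeSet, Set.mem_insert_iff, Set.mem_image, Sym2.exists, Sym2.map_mk,
      comap_adj, Function.Embedding.subtype_apply, Subtype.exists, Set.mem_compl_iff,
      Set.mem_singleton_iff, Sym2.eq_iff]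
    constructor
    · intro h
      by_cases ha : a = ℓ
      · exact .inl (.inl ⟨ha, (hℓ b).1 (ha ▸ h)⟩)
      by_cases hb : b = ℓ
      · exact .inl (.inr ⟨(hℓ a).1 (hb ▸ h.symm), hb⟩)
      exact .inr ⟨a, ha, b, hb, h, .inl ⟨rfl, rfl⟩⟩
    · rintro ((⟨rfl, rfl⟩ | ⟨rfl, rfl⟩) | ⟨a, -, b, -, h, ⟨rfl, rfl⟩ | ⟨rfl, rfl⟩⟩)
      · exact (hℓ _).2 rfl
      · exact ((hℓ _).2 rfl).symm
      · exact h
      · exact h.symm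

lemma edgesWeight_eq_edgesWeight_induce_compl_add [Finite V] (w : V → V → ℝ)
    (hs : ∀ a b, w a b = w b a) (hℓ : ∀ x, T.Adj ℓ x ↔ x = u) :
    edgesWeight w hs T.edgeSet =
      edgesWeight (fun a b : ({ℓ}ᶜ : Set V) => w a b) (fun a b => hs a b)
        (T.induce {ℓ}ᶜ).edgeSet + w ℓ u := by
  have hℓu : s(ℓ, u) ∉ Sym2.map Subtype.val '' (T.induce {ℓ}ᶜ).edgeSet := by
    rintro ⟨e, -, he⟩
    induction e using Sym2.ind with
    | _ a b =>
      simp only [Sym2.map_mk, Sym2.eq_iff] at he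
      rcases he with ⟨h, -⟩ | ⟨-, h⟩
      exacts [a.2 h, b.2 h]
  rw [edgesWeight, edgeSet_eq_insert_image_induce_compl hℓ,
    finsum_mem_insert _ hℓu (Set.toFinite _),
    finsum_mem_image (Sym2.map.injective Subtype.val_injective).injOn, add_comm, edgesWeight]
  refine congrArg₂ _ (finsum_mem_congr rfl fun e _ => ?_) rfl
  induction e using Sym2.ind
  rfl

end leaf

section tours

variable {T : SimpleGraph V} {w : V → V → ℝ} {hs : ∀ a b, w a b = w b a} {ℓ u : V}

def HasTours (T : SimpleGraph V) (w : V → V → ℝ) (hs : ∀ a b, w a b = w b a) : Prop :=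
  ∀ (cs ct : V) (q : T.Walk cs ct), q.IsPath → ∃ p : T.Walk cs ct, (∀ v, v ∈ p.support) ∧
    walkWeight w p = 2 * edgesWeight w hs T.edgeSet - walkWeight w q

lemma HasTours.exists_walk_of_induce {s : Set V}
    (ih : HasTours (T.induce s) (fun a b => w a b) (fun a b => hs a b)) (hT : T.IsAcyclic)
    (hT' : (T.induce s).Preconnected) {cs ct : V} (hcs : cs ∈ s) (hct : ct ∈ s)
    (q : T.Walk cs ct) (hq : q.IsPath) :
    ∃ p : T.Walk cs ct, (∀ v ∈ s, v ∈ p.support) ∧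
      walkWeight w p = 2 * edgesWeight (fun a b : s => w a b) (fun a b => hs a b)
        (T.induce s).edgeSet - walkWeight w q := by
  obtain ⟨q', hq', rfl⟩ := hT.exists_isPath_induce_map_eq hT' hcs hct q hq
  obtain ⟨p', hp'cov, hp'w⟩ := ih _ _ q' hq'
  refine ⟨p'.map (Embedding.induce s).toHom,
    fun v hv => Walk.mem_support_map_induce hv (hp'cov _), ?_⟩
  have hpw := walkWeight_map (Embedding.induce s).toHom w p'
  have hqw := walkWeight_map (Embedding.induce s).toHom w q'
  exact hpw.trans (hp'w.trans (congrArg _ hqw.symm))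

lemma exists_tour_of_leaf_not_endpoint [Finite V] (hT : T.IsTree) (hℓ : ∀ x, T.Adj ℓ x ↔ x = u)
    (ih : HasTours (T.induce {ℓ}ᶜ) (fun a b => w a b) (fun a b => hs a b)) {cs ct : V}
    (hcs : cs ≠ ℓ) (hct : ct ≠ ℓ) (q : T.Walk cs ct) (hq : q.IsPath) :
    ∃ p : T.Walk cs ct, (∀ v, v ∈ p.support) ∧
      walkWeight w p = 2 * edgesWeight w hs T.edgeSet - walkWeight w q := by
  obtain ⟨p', hp'cov, hp'w⟩ := ih.exists_walk_of_induce hT.isAcyclic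
    (hT.induce_compl_singleton_of_adj_iff hℓ).connected.preconnected hcs hct q hq
  have hℓu : T.Adj ℓ u := (hℓ u).2 rfl
  obtain ⟨p, hp, hpw⟩ := p'.exists_detour w (hp'cov u hℓu.ne.symm) hℓu.symm
  refine ⟨p, fun v => (hp v).2 ?_, ?_⟩
  · by_cases hv : v = ℓ
    exacts [.inl hv, .inr (hp'cov v hv)]
  · rw [hpw, hp'w, edgesWeight_eq_edgesWeight_induce_compl_add w hs hℓ, hs u ℓ]
    ring

lemma exists_tour_of_leaf_start [Finite V] (hT : T.IsTree) (hℓ : ∀ x, T.Adj ℓ x ↔ x = u)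
    (ih : HasTours (T.induce {ℓ}ᶜ) (fun a b => w a b) (fun a b => hs a b)) {ct : V}
    (hct : ct ≠ ℓ) (q : T.Walk ℓ ct) (hq : q.IsPath) :
    ∃ p : T.Walk ℓ ct, (∀ v, v ∈ p.support) ∧
      walkWeight w p = 2 * edgesWeight w hs T.edgeSet - walkWeight w q := by
  cases q with
  | nil => exact absurd rfl hct
  | cons h q =>
    obtain rfl := (hℓ _).1 h
    obtain ⟨p', hp'cov, hp'w⟩ := ih.exists_walk_of_induce hT.isAcyclic
      (hT.induce_compl_singleton_of_adj_iff hℓ).connected.preconnected h.ne.symm hct q hq.of_cons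
    refine ⟨.cons h p', fun v => ?_, ?_⟩
    · rw [Walk.support_cons, List.mem_cons]
      by_cases hv : v = ℓ
      exacts [.inl hv, .inr (hp'cov v hv)]
    · rw [walkWeight_cons, walkWeight_cons, hp'w,
        edgesWeight_eq_edgesWeight_induce_compl_add w hs hℓ]
      ring

theorem IsTree.hasTours [Finite V] (hT : T.IsTree) (w : V → V → ℝ) (hs : ∀ a b, w a b = w b a) :
    HasTours T w hs := by
  induction V using Finite.induction_subsingleton_or_nontrivial with
  | hbase V =>
    intro cs ct q _
    cases q with
    | cons h _ => exact absurd (Subsingleton.elim _ _) h.ne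
    | nil =>
      have hE : T.edgeSet = ∅ := edgeSet_eq_empty.2 (Subsingleton.elim _ _)
      exact ⟨.nil, fun v => by simp [Subsingleton.elim v cs], by simp [hE, edgesWeight]⟩
  | hstep V ih =>
    intro cs ct q hq
    obtain ⟨ℓ, u, hℓct, hℓ⟩ := hT.exists_leaf_ne ct
    have ih' := ih _ (Finite.card_subtype_lt (p := (· ∈ ({ℓ}ᶜ : Set V))) (x := ℓ) (by simp))
      (hT.induce_compl_singleton_of_adj_iff hℓ) (fun a b => w a b) (fun a b => hs a b)
    by_cases hcs : cs = ℓ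
    · subst hcs
      exact exists_tour_of_leaf_start hT hℓ ih' hℓct.symm q hq
    · exact exists_tour_of_leaf_not_endpoint hT hℓ ih' hcs hℓct.symm q hq

end tours

end SimpleGraph

theorem stmt_9_general {V : Type*} [Fintype V] (T : SimpleGraph V) (hT : T.IsTree)
    (w : V → V → ℝ) (hsymm : ∀ u v, w u v = w v u)
    (cs ct : V) (q : T.Walk cs ct) (hq : q.IsPath) :
    ∃ p : T.Walk cs ct, (∀ v : V, v ∈ p.support) ∧
      walkWeight w p = 2 * edgesWeight w hsymm T.edgeSet - walkWeight w q :=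
  hT.hasTours w hsymm cs ct q hq

/-- In a weighted tree `T` there is a walk from `c_s` to `c_t` visiting
every vertex whose length is exactly `2·w(T) − d_T(c_s, c_t)` (the latter being the length
of the unique simple path `q` between `c_s` and `c_t`). -/
theorem stmt_9 {V : Type*} [Fintype V] (T : SimpleGraph V) (hT : T.IsTree)
    (w : V → V → ℝ) (hw : ∀ u v, 0 ≤ w u v) (hsymm : ∀ u v, w u v = w v u)
    (cs ct : V) (q : T.Walk cs ct) (hq : q.IsPath) :
    ∃ p : T.Walk cs ct, (∀ v : V, v ∈ p.support) ∧
      walkWeight w p = 2 * edgesWeight w hsymm T.edgeSet - walkWeight w q :=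
  stmt_9_general T hT w hsymm cs ct q hq
end

section
/- For every source vertex s ∈ V there exists a spanning subgraph H of G with at most 2^k·n edges such that σ_H(s,t) = σ_G(s,t) for every vertex t ∈ V, i.e., a single-source group Steiner preserver with source s and size at most 2^k·n. -/
open SimpleGraph ENNReal

/-!
For each set `S` of groups and each target `t`, fix an optimal walk from `s` to `t` visiting all
groups of `S`: of minimum weight and, among those, of minimum number of edges. Let `H` consist of
the last edges of these `2^k·n` walks. If the optimal walk for `(S, t)` ends with the edge `ut`,
its prefix is exactly as good as the optimal walk for `u` and the groups of `S` not containing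
`t`, and that walk is strictly shorter; so by induction on length `H` contains a walk as good as every
optimal walk.
-/

section

variable {V : Type*} {G H : SimpleGraph V} (w : V → V → ℝ)

lemma walkWeight_concat {u v t : V} (p : G.Walk u v) (h : G.Adj v t) :
    walkWeight w (p.concat h) = walkWeight w p + w v t := by
  simp [walkWeight, Walk.darts_concat]

lemma walkWeight_mapLe (hGH : G ≤ H) {u v : V} (p : G.Walk u v) :
    walkWeight w (p.mapLe hGH) = walkWeight w p := by
  simp [walkWeight, Walk.mapLe, Walk.darts_map, Function.comp_def]

lemma walkWeight_mem_closure {u v : V} (p : G.Walk u v) :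
    walkWeight w p ∈ AddSubmonoid.closure (Set.range fun x : V × V => w x.1 x.2) :=
  AddSubmonoid.list_sum_mem _ fun _ hx => by
    obtain ⟨d, -, rfl⟩ := List.mem_map.1 hx
    exact AddSubmonoid.subset_closure ⟨d.toProd, rfl⟩

/-- Walk weights lie in the additive monoid generated by the finitely many nonnegative edge
weights, which is well-ordered; so a minimum exists although there are infinitely many walks. -/
lemma exists_forall_walkWeight_le [Finite V] (hw : ∀ u v, 0 ≤ w u v) {u v : V}
    {P : G.Walk u v → Prop} (hP : ∃ p, P p) :
    ∃ p, P p ∧ ∀ q, P q → walkWeight w p ≤ walkWeight w q := by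
  have hwf : (AddSubmonoid.closure (Set.range fun x : V × V => w x.1 x.2) : Set ℝ).IsWF :=
    ((Set.finite_range _).isPWO.addSubmonoid_closure
      (by rintro _ ⟨x, rfl⟩; exact hw _ _)).isWF
  have hT : (walkWeight w '' {p | P p}).IsWF :=
    hwf.mono (Set.image_subset_iff.2 fun p _ => walkWeight_mem_closure w p)
  have hne : (walkWeight w '' {p | P p}).Nonempty :=
    let ⟨p, hp⟩ := hP; ⟨_, p, hp, rfl⟩
  obtain ⟨p, hp, hpmin⟩ := hT.min_mem hne
  exact ⟨p, hp, fun q hq => hpmin ▸ hT.min_le hne ⟨q, hq, rfl⟩⟩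

section Covers

variable {ι : Type*} (R : ι → Set V)

def CoversGroups (S : Set ι) {u v : V} (p : G.Walk u v) : Prop :=
  ∀ i ∈ S, ∃ x ∈ R i, x ∈ p.support

/-- The length tie-break keeps the last-edge construction well-founded in the presence of
zero-weight edges. -/
def IsOptimalCover (S : Set ι) {u v : V} (p : G.Walk u v) : Prop :=
  CoversGroups R S p ∧ (∀ q : G.Walk u v, CoversGroups R S q → walkWeight w p ≤ walkWeight w q) ∧
    ∀ q : G.Walk u v, CoversGroups R S q → walkWeight w q = walkWeight w p → p.length ≤ q.length

variable {R}

lemma coversGroups_univ_iff {k : ℕ} {R : Fin k → Set V} {u v : V} {p : G.Walk u v} :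
    CoversGroups R Set.univ p ↔ IsGroupSteiner R p := by
  simp [CoversGroups, IsGroupSteiner]

lemma coversGroups_mapLe_iff (hGH : G ≤ H) {S : Set ι} {u v : V} {p : G.Walk u v} :
    CoversGroups R S (p.mapLe hGH) ↔ CoversGroups R S p := by
  simp only [CoversGroups, Walk.support_mapLe_eq_support]

lemma coversGroups_concat_iff {S : Set ι} {u v t : V} {p : G.Walk u v} {h : G.Adj v t} :
    CoversGroups R S (p.concat h) ↔ CoversGroups R (S \ {i | t ∈ R i}) p := by
  simp only [CoversGroups, Walk.support_concat, List.mem_append, List.mem_singleton,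
    Set.mem_sdiff, Set.mem_ofPred_eq, and_imp]
  refine ⟨fun hp i hi ht => ?_, fun hp i hi => ?_⟩
  · obtain ⟨x, hx, hxp | rfl⟩ := hp i hi
    exacts [⟨x, hx, hxp⟩, absurd hx ht]
  · by_cases ht : t ∈ R i
    · exact ⟨t, ht, Or.inr rfl⟩
    · obtain ⟨x, hx, hxp⟩ := hp i hi ht
      exact ⟨x, hx, Or.inl hxp⟩

variable {w}

lemma exists_isOptimalCover [Finite V] (hw : ∀ u v, 0 ≤ w u v) {S : Set ι} {u v : V}
    (h : ∃ p : G.Walk u v, CoversGroups R S p) : ∃ p : G.Walk u v, IsOptimalCover w R S p := by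
  obtain ⟨p₀, hp₀, hp₀min⟩ := exists_forall_walkWeight_le w hw h
  obtain ⟨p, ⟨hp, hpw⟩, hplen⟩ := (measure (Walk.length (G := G) (u := u) (v := v))).wf.has_min
    {q | CoversGroups R S q ∧ walkWeight w q = walkWeight w p₀} ⟨p₀, hp₀, rfl⟩
  refine ⟨p, hp, fun q hq => hpw ▸ hp₀min q hq, fun q hq hqw => ?_⟩
  exact not_lt.1 (hplen q ⟨hq, hqw.trans hpw⟩)

lemma IsOptimalCover.length_le {S : Set ι} {u v : V} {p q : G.Walk u v}
    (hp : IsOptimalCover w R S p) (hq : IsOptimalCover w R S q) : p.length ≤ q.length :=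
  hp.2.2 q hq.1 (le_antisymm (hq.2.1 p hp.1) (hp.2.1 q hq.1))

lemma IsOptimalCover.walkWeight_eq_and_length_le_of_concat {S : Set ι} {u v t : V}
    {q : G.Walk u v} {h : G.Adj v t} (hp : IsOptimalCover w R S (q.concat h))
    {p' : G.Walk u v} (hp' : IsOptimalCover w R (S \ {i | t ∈ R i}) p') :
    walkWeight w p' = walkWeight w q ∧ p'.length ≤ q.length := by
  have hq : CoversGroups R (S \ {i | t ∈ R i}) q := coversGroups_concat_iff.1 hp.1
  have hle : walkWeight w q ≤ walkWeight w p' := by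
    have := hp.2.1 (p'.concat h) (coversGroups_concat_iff.2 hp'.1)
    rwa [walkWeight_concat, walkWeight_concat, add_le_add_iff_right] at this
  have hweq : walkWeight w p' = walkWeight w q := le_antisymm (hp'.2.1 q hq) hle
  exact ⟨hweq, hp'.2.2 q hq hweq.symm⟩

end Covers

section GroupSteinerDistance

variable {w} {k : ℕ} {R : Fin k → Set V}

lemma gsDist_le_walkWeight {u v : V} {p : G.Walk u v} (hp : IsGroupSteiner R p) :
    gsDist G w R u v ≤ ENNReal.ofReal (walkWeight w p) :=
  iInf_le_of_le ⟨p, hp⟩ le_rfl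

lemma gsDist_anti (hGH : G ≤ H) (u v : V) : gsDist H w R u v ≤ gsDist G w R u v :=
  le_iInf fun ⟨p, hp⟩ => by
    simpa only [walkWeight_mapLe] using
      gsDist_le_walkWeight (coversGroups_univ_iff.1 ((coversGroups_mapLe_iff hGH).2
        (coversGroups_univ_iff.2 hp)))

lemma IsOptimalCover.le_gsDist {u v : V} {p : G.Walk u v} (hp : IsOptimalCover w R Set.univ p) :
    ENNReal.ofReal (walkWeight w p) ≤ gsDist G w R u v :=
  le_iInf fun ⟨q, hq⟩ => ENNReal.ofReal_le_ofReal (hp.2.1 q (coversGroups_univ_iff.2 hq))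

end GroupSteinerDistance

section Preserver

variable {ι : Type*}

def HasOptimalLastEdges (G H : SimpleGraph V) (w : V → V → ℝ) (R : ι → Set V) (s : V) : Prop :=
  ∀ (S : Set ι) (t : V), (∃ p : G.Walk s t, CoversGroups R S p) →
    ∃ p : G.Walk s t, IsOptimalCover w R S p ∧ (¬p.Nil → H.Adj p.penultimate t)

variable {w} {R : ι → Set V} {s : V}

lemma HasOptimalLastEdges.exists_walk_le (hH : HasOptimalLastEdges G H w R s) {S : Set ι}
    {t : V} {p : G.Walk s t} (hp : IsOptimalCover w R S p) :
    ∃ r : H.Walk s t, CoversGroups R S r ∧ walkWeight w r ≤ walkWeight w p := by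
  induction hn : p.length using Nat.strong_induction_on generalizing S t p with
  | _ n ih =>
  obtain ⟨p', hp', hlast⟩ := hH S t ⟨p, hp.1⟩
  have hle : walkWeight w p' ≤ walkWeight w p := hp'.2.1 p hp.1
  by_cases hnil : p'.Nil
  · obtain rfl := hnil.eq
    obtain rfl := Walk.eq_nil_iff_nil.2 hnil
    exact ⟨Walk.nil, hp'.1, hle⟩
  obtain ⟨u, q, hG, rfl⟩ : ∃ (u : V) (q : G.Walk s u) (h : G.Adj u t), p' = q.concat h :=
    ⟨_, _, _, (p'.concat_dropLast (p'.adj_penultimate hnil)).symm⟩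
  have hHadj : H.Adj u t := by simpa using hlast hnil
  obtain ⟨p'', hp'', -⟩ := hH (S \ {i | t ∈ R i}) u ⟨q, coversGroups_concat_iff.1 hp'.1⟩
  obtain ⟨hweq, hlen⟩ := hp'.walkWeight_eq_and_length_le_of_concat hp''
  have hshorter : p''.length < n := by
    have := hp'.length_le hp
    rw [Walk.length_concat] at this
    omega
  obtain ⟨r, hr, hrw⟩ := ih _ hshorter hp'' rfl
  refine ⟨r.concat hHadj, coversGroups_concat_iff.2 hr, ?_⟩
  calc walkWeight w (r.concat hHadj) = walkWeight w r + w u t := walkWeight_concat w r hHadj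
    _ ≤ walkWeight w q + w u t := by rw [← hweq]; exact add_le_add_left hrw _
    _ = walkWeight w (q.concat hG) := (walkWeight_concat w q hG).symm
    _ ≤ walkWeight w p := hle

lemma HasOptimalLastEdges.gsDist_eq {k : ℕ} {R : Fin k → Set V} (hGH : H ≤ G)
    (hH : HasOptimalLastEdges G H w R s) (t : V) : gsDist H w R s t = gsDist G w R s t := by
  refine le_antisymm ?_ (gsDist_anti hGH s t)
  by_cases hcov : ∃ p : G.Walk s t, CoversGroups R Set.univ p
  · obtain ⟨p, hp, -⟩ := hH Set.univ t hcov
    obtain ⟨r, hr, hrw⟩ := hH.exists_walk_le hp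
    calc gsDist H w R s t ≤ ENNReal.ofReal (walkWeight w r) :=
          gsDist_le_walkWeight (coversGroups_univ_iff.1 hr)
      _ ≤ ENNReal.ofReal (walkWeight w p) := ENNReal.ofReal_le_ofReal hrw
      _ ≤ gsDist G w R s t := hp.le_gsDist
  · have htop : gsDist G w R s t = ⊤ :=
      iInf_eq_top.2 fun ⟨p, hp⟩ => absurd ⟨p, coversGroups_univ_iff.2 hp⟩ hcov
    exact htop ▸ le_top

lemma exists_hasOptimalLastEdges [Fintype V] [Fintype ι] (hw : ∀ u v, 0 ≤ w u v)
    (R : ι → Set V) (s : V) :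
    ∃ H ≤ G, H.edgeSet.ncard ≤ 2 ^ Fintype.card ι * Fintype.card V ∧
      HasOptimalLastEdges G H w R s := by
  classical
  have hedge : ∀ x : Set ι × V, ∃ e : Sym2 V, (∃ p : G.Walk s x.2, CoversGroups R x.1 p) →
      ∃ p : G.Walk s x.2, IsOptimalCover w R x.1 p ∧ e = s(p.penultimate, x.2) := by
    intro x
    by_cases hcov : ∃ p : G.Walk s x.2, CoversGroups R x.1 p
    · obtain ⟨p, hp⟩ := exists_isOptimalCover hw hcov
      exact ⟨_, fun _ => ⟨p, hp, rfl⟩⟩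
    · exact ⟨s(s, s), fun h => absurd h hcov⟩
  choose e he using hedge
  refine ⟨fromEdgeSet (Set.range e) ⊓ G, inf_le_right, ?_, fun S t hcov => ?_⟩
  · calc (fromEdgeSet (Set.range e) ⊓ G).edgeSet.ncard ≤ (Set.range e).ncard := by
          refine Set.ncard_le_ncard ?_ (Set.finite_range e)
          rw [edgeSet_inf, edgeSet_fromEdgeSet]
          exact Set.inter_subset_left.trans Set.sdiff_subset
      _ ≤ Nat.card (Set ι × V) := by
          rw [← Nat.card_coe_set_eq]; exact Finite.card_range_le e
      _ = 2 ^ Fintype.card ι * Fintype.card V := by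
          rw [Nat.card_eq_fintype_card, Fintype.card_prod, Fintype.card_set]
  · obtain ⟨p, hp, hpe⟩ := he (S, t) hcov
    refine ⟨p, hp, fun hnil => ?_⟩
    have hG := p.adj_penultimate hnil
    exact ⟨(fromEdgeSet_adj _).2 ⟨⟨(S, t), hpe⟩, hG.ne⟩, hG⟩

end Preserver

end

theorem stmt_14_general {V : Type*} [Fintype V] (G : SimpleGraph V)
    (w : V → V → ℝ) (hw : ∀ u v, 0 ≤ w u v)
    {k : ℕ} (R : Fin k → Set V)
    (s : V) :
    ∃ H : SimpleGraph V, H ≤ G ∧ H.edgeSet.ncard ≤ 2 ^ k * Fintype.card V ∧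
      ∀ t : V, gsDist H w R s t = gsDist G w R s t := by
  obtain ⟨H, hGH, hcard, hH⟩ := exists_hasOptimalLastEdges (G := G) hw R s
  exact ⟨H, hGH, by simpa using hcard, hH.gsDist_eq hGH⟩

/-- For every source `s` there is a single-source group Steiner
preserver with at most `2^k·n` edges. -/
theorem stmt_14 {V : Type*} [Fintype V] (G : SimpleGraph V) (hconn : G.Connected)
    (w : V → V → ℝ) (hw : ∀ u v, 0 ≤ w u v) (hsymm : ∀ u v, w u v = w v u)
    {k : ℕ} (R : Fin k → Set V) (hR : ∀ i, (R i).Nonempty)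
    (s : V) :
    ∃ H : SimpleGraph V, H ≤ G ∧ H.edgeSet.ncard ≤ 2 ^ k * Fintype.card V ∧
      ∀ t : V, gsDist H w R s t = gsDist G w R s t :=
  stmt_14_general G w hw R s
end

section
/- Let T be a tree and let D be a subset of its vertices with |D| even. Then D can be partitioned into |D|/2 pairs {x_1,y_1}, …, {x_{|D|/2}, y_{|D|/2}} such that the unique simple paths in T between x_i and y_i, for i = 1, …, |D|/2, are pairwise edge-disjoint. -/
open SimpleGraph ENNReal

private lemma walk_split {V : Type*} {G : SimpleGraph V} {a b : V} (p : G.Walk a b)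
    (d : G.Dart) (hd : d ∈ p.darts) :
    ∃ (p1 : G.Walk a d.fst) (p2 : G.Walk d.snd b), p1.length + 1 + p2.length = p.length := by
  induction p with
  | nil => simp at hd
  | cons h q ih =>
    rw [Walk.darts_cons, List.mem_cons] at hd
    rcases hd with rfl | hd
    · exact ⟨Walk.nil, q, by simp [Nat.add_comm]⟩
    · obtain ⟨p1, p2, hlen⟩ := ih hd
      exact ⟨Walk.cons h p1, p2, by simp only [Walk.length_cons]; omega⟩

private lemma tree_path_length {V : Type*} {T : SimpleGraph V} (hT : T.IsTree)
    {a b : V} (p : T.Walk a b) (hp : p.IsPath) : p.length = T.dist a b := by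
  classical
  obtain ⟨q, hq⟩ := (hT.isConnected a b).exists_walk_length_eq_dist
  obtain ⟨r, -, hr⟩ := hT.existsUnique_path a b
  have h1 : p = r := hr p hp
  have h2 : q.bypass = r := hr q.bypass q.bypass_isPath
  have h3 : T.dist a b ≤ p.length := SimpleGraph.dist_le p
  have h4 : q.bypass.length ≤ q.length := q.length_bypass_le
  rw [h1, ← h2] at *
  omega

private lemma tree_dart_dist {V : Type*} {T : SimpleGraph V} (hT : T.IsTree)
    {a b : V} (p : T.Walk a b) (hp : p.IsPath) (d : T.Dart) (hd : d ∈ p.darts) :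
    T.dist a d.fst + 1 + T.dist d.snd b = T.dist a b := by
  obtain ⟨p1, p2, hlen⟩ := walk_split p d hd
  have h1 : T.dist a d.fst ≤ p1.length := SimpleGraph.dist_le p1
  have h2 : T.dist d.snd b ≤ p2.length := SimpleGraph.dist_le p2
  have h3 : p.length = T.dist a b := tree_path_length hT p hp
  have h4 : T.dist a b ≤ T.dist a d.fst + T.dist d.fst d.snd + T.dist d.snd b := by
    calc T.dist a b ≤ T.dist a d.snd + T.dist d.snd b := hT.isConnected.dist_triangle
      _ ≤ (T.dist a d.fst + T.dist d.fst d.snd) + T.dist d.snd b := by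
          exact Nat.add_le_add_right hT.isConnected.dist_triangle _
  have h5 : T.dist d.fst d.snd ≤ 1 := by
    have := SimpleGraph.dist_le (Walk.cons d.adj Walk.nil)
    simpa using this
  omega

private lemma key_sum {m : ℕ} (g g' : Fin m → ℕ) {i j : Fin m} (hij : i ≠ j)
    (hrest : ∀ k, k ≠ i → k ≠ j → g' k = g k) (hij2 : g' i + g' j + 2 ≤ g i + g j) :
    ∑ k, g' k + 2 ≤ ∑ k, g k := by
  have hdec : ∀ h : Fin m → ℕ,
      ∑ k, h k = h i + (h j + ∑ k ∈ (Finset.univ.erase i).erase j, h k) := by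
    intro h
    rw [Finset.add_sum_erase _ h (by simp [Ne.symm hij] : j ∈ Finset.univ.erase i),
      Finset.add_sum_erase _ h (Finset.mem_univ i)]
  have heq : ∑ k ∈ (Finset.univ.erase i).erase j, g' k
      = ∑ k ∈ (Finset.univ.erase i).erase j, g k := by
    refine Finset.sum_congr rfl fun k hk => ?_
    simp only [Finset.mem_erase] at hk
    exact hrest k hk.2.1 hk.1
  rw [hdec g, hdec g', heq]
  omega

/-- In a tree `T`, any even-sized vertex subset `D` can be partitioned
into pairs whose unique connecting simple paths in `T` are pairwise edge-disjoint. -/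
theorem stmt_17 {V : Type*} [Fintype V] (T : SimpleGraph V) (hT : T.IsTree)
    (D : Finset V) (hD : Even D.card) :
    ∃ (m : ℕ) (x y : Fin m → V),
      2 * m = D.card ∧
      (∀ i, x i ∈ D ∧ y i ∈ D) ∧
      Function.Injective (fun p : Fin m × Bool => if p.2 then x p.1 else y p.1) ∧
      (∀ d ∈ D, ∃ i, d = x i ∨ d = y i) ∧
      (∀ i j : Fin m, i ≠ j →
        ∀ (p : T.Walk (x i) (y i)) (q : T.Walk (x j) (y j)),
          p.IsPath → q.IsPath → ∀ e ∈ p.edges, e ∉ q.edges) := by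
  classical
  obtain ⟨m, hm⟩ := hD
  -- valid configurations
  set P : (Fin m × Bool → V) → Prop := fun f =>
    Function.Injective f ∧ (∀ p, f p ∈ D) ∧ (∀ d ∈ D, ∃ p, f p = d) with hP
  -- existence of a configuration
  have hcard : Fintype.card (Fin m × Bool) = Fintype.card {v // v ∈ D} := by
    simp [Fintype.card_coe, hm]; ring
  have hEx : ∃ f, P f := by
    obtain e := Fintype.equivOfCardEq hcard
    refine ⟨fun p => (e p : V), fun p q hpq => e.injective (Subtype.ext hpq),
      fun p => (e p).2, fun d hd => ⟨e.symm ⟨d, hd⟩, by simp⟩⟩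
  -- preservation of validity under permutations
  have hperm : ∀ (f : Fin m × Bool → V) (σ : Equiv.Perm (Fin m × Bool)), P f → P (f ∘ σ) := by
    rintro f σ ⟨h1, h2, h3⟩
    refine ⟨h1.comp σ.injective, fun p => h2 (σ p), fun d hd => ?_⟩
    obtain ⟨p, hp⟩ := h3 d hd
    exact ⟨σ.symm p, by simpa using hp⟩
  -- minimize total distance
  have : Nonempty {f // P f} := ⟨⟨hEx.choose, hEx.choose_spec⟩⟩
  obtain ⟨⟨f, hf⟩, hmin⟩ := Finite.exists_min
    (fun f : {f // P f} => ∑ k : Fin m, T.dist (f.1 (k, true)) (f.1 (k, false)))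
  refine ⟨m, fun i => f (i, true), fun i => f (i, false), by omega,
    fun i => ⟨hf.2.1 _, hf.2.1 _⟩, ?_, ?_, ?_⟩
  · have hfe : (fun p : Fin m × Bool =>
        if p.2 then f (p.1, true) else f (p.1, false)) = f := by
      funext p
      obtain ⟨i, b⟩ := p
      cases b <;> simp
    rw [hfe]; exact hf.1
  · intro d hd
    obtain ⟨⟨i, b⟩, hp⟩ := hf.2.2 d hd
    cases b
    · exact ⟨i, Or.inr hp.symm⟩
    · exact ⟨i, Or.inl hp.symm⟩
  · intro i j hij p q hp hq e he heq
    simp only [Walk.edges, List.mem_map] at he heq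
    obtain ⟨d1, hd1, rfl⟩ := he
    obtain ⟨d2, hd2, hde⟩ := heq
    rw [dart_edge_eq_iff] at hde
    have h1 : T.dist (f (i, true)) d1.fst + 1 + T.dist d1.snd (f (i, false))
        = T.dist (f (i, true)) (f (i, false)) := tree_dart_dist hT p hp d1 hd1
    have tri : ∀ x y z : V, T.dist x z ≤ T.dist x y + T.dist y z :=
      fun x y z => hT.isConnected.dist_triangle
    have hcm : ∀ x y : V, T.dist x y = T.dist y x := fun x y => SimpleGraph.dist_comm
    obtain hc | hc := hde
    · -- d2 = d1 : swap (i,false) (j,true)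
      have h2 : T.dist (f (j, true)) d1.fst + 1 + T.dist d1.snd (f (j, false))
          = T.dist (f (j, true)) (f (j, false)) := by
        have := tree_dart_dist hT q hq d2 hd2
        rw [hc] at this; exact this
      set σ := Equiv.swap ((i, false) : Fin m × Bool) (j, true) with hσ
      have hfP := hperm f σ hf
      have hgi : (f ∘ σ) (i, true) = f (i, true) := by
        simp [hσ, Equiv.swap_apply_of_ne_of_ne, hij, Prod.ext_iff]
      have hgi' : (f ∘ σ) (i, false) = f (j, true) := by simp [hσ]
      have hgj : (f ∘ σ) (j, true) = f (i, false) := by simp [hσ]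
      have hgj' : (f ∘ σ) (j, false) = f (j, false) := by
        simp [hσ, Equiv.swap_apply_of_ne_of_ne, Ne.symm hij, Prod.ext_iff, hij]
      have hrest : ∀ k, k ≠ i → k ≠ j →
          T.dist ((f ∘ σ) (k, true)) ((f ∘ σ) (k, false))
          = T.dist (f (k, true)) (f (k, false)) := by
        intro k hki hkj
        rw [show (f ∘ σ) (k, true) = f (k, true) by
            simp [hσ, Equiv.swap_apply_of_ne_of_ne, Prod.ext_iff, hki, hkj],
          show (f ∘ σ) (k, false) = f (k, false) by
            simp [hσ, Equiv.swap_apply_of_ne_of_ne, Prod.ext_iff, hki, hkj]]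
      have hpair : T.dist ((f ∘ σ) (i, true)) ((f ∘ σ) (i, false))
          + T.dist ((f ∘ σ) (j, true)) ((f ∘ σ) (j, false)) + 2
          ≤ T.dist (f (i, true)) (f (i, false)) + T.dist (f (j, true)) (f (j, false)) := by
        rw [hgi, hgi', hgj, hgj']
        have t1 : T.dist (f (i, true)) (f (j, true))
            ≤ T.dist (f (i, true)) d1.fst + T.dist (f (j, true)) d1.fst := by
          rw [hcm (f (j, true)) d1.fst]; exact tri _ _ _
        have t2 : T.dist (f (i, false)) (f (j, false))
            ≤ T.dist d1.snd (f (i, false)) + T.dist d1.snd (f (j, false)) := by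
          rw [hcm d1.snd (f (i, false))]; exact tri _ _ _
        omega
      have hsum := key_sum (fun k => T.dist (f (k, true)) (f (k, false)))
        (fun k => T.dist ((f ∘ σ) (k, true)) ((f ∘ σ) (k, false))) hij hrest hpair
      have := hmin ⟨f ∘ σ, hfP⟩
      simp only at this hsum
      omega
    · -- d2 = d1.symm : swap (i,false) (j,false)
      have h2 : T.dist (f (j, true)) d1.snd + 1 + T.dist d1.fst (f (j, false))
          = T.dist (f (j, true)) (f (j, false)) := by
        have := tree_dart_dist hT q hq d2 hd2
        rw [hc] at this; exact this
      set σ := Equiv.swap ((i, false) : Fin m × Bool) (j, false) with hσ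
      have hfP := hperm f σ hf
      have hgi : (f ∘ σ) (i, true) = f (i, true) := by
        simp [hσ, Equiv.swap_apply_of_ne_of_ne, hij, Prod.ext_iff]
      have hgi' : (f ∘ σ) (i, false) = f (j, false) := by simp [hσ]
      have hgj : (f ∘ σ) (j, true) = f (j, true) := by
        simp [hσ, Equiv.swap_apply_of_ne_of_ne, Ne.symm hij, Prod.ext_iff]
      have hgj' : (f ∘ σ) (j, false) = f (i, false) := by simp [hσ, Ne.symm hij]
      have hrest : ∀ k, k ≠ i → k ≠ j →
          T.dist ((f ∘ σ) (k, true)) ((f ∘ σ) (k, false))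
          = T.dist (f (k, true)) (f (k, false)) := by
        intro k hki hkj
        rw [show (f ∘ σ) (k, true) = f (k, true) by
            simp [hσ, Equiv.swap_apply_of_ne_of_ne, Prod.ext_iff, hki, hkj],
          show (f ∘ σ) (k, false) = f (k, false) by
            simp [hσ, Equiv.swap_apply_of_ne_of_ne, Prod.ext_iff, hki, hkj]]
      have hpair : T.dist ((f ∘ σ) (i, true)) ((f ∘ σ) (i, false))
          + T.dist ((f ∘ σ) (j, true)) ((f ∘ σ) (j, false)) + 2
          ≤ T.dist (f (i, true)) (f (i, false)) + T.dist (f (j, true)) (f (j, false)) := by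
        rw [hgi, hgi', hgj, hgj']
        have t1 : T.dist (f (i, true)) (f (j, false))
            ≤ T.dist (f (i, true)) d1.fst + T.dist d1.fst (f (j, false)) := tri _ _ _
        have t2 : T.dist (f (j, true)) (f (i, false))
            ≤ T.dist (f (j, true)) d1.snd + T.dist d1.snd (f (i, false)) := tri _ _ _
        omega
      have hsum := key_sum (fun k => T.dist (f (k, true)) (f (k, false)))
        (fun k => T.dist ((f ∘ σ) (k, true)) ((f ∘ σ) (k, false))) hij hrest hpair
      have := hmin ⟨f ∘ σ, hfP⟩
      simp only at this hsum
      omega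
end
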